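/- Lemma ('lem:partialK F vanishes'): Let F ∈ 𝒞_𝒪 and let k ∈ ℕ^{d+1} with k ≠ 0. Then ∂^k F = 0 if and only if F is constant. -/

import Mathlib

/-
Common framework: multi-indices, the algebra of smooth functions on ℝ^𝒪,
and the spaces of decorated trees 𝒱 and 𝔅 of [Bruned–Chandra–Chevyrev–Hairer,
"Renormalising SPDEs in regularity structures"], presented abstractly together
with the defining recursions of the various operators on them.
-/

open scoped BigOperators Classical

namespace SPDERenorm

/-! ### Multi-indices in `ℕ^{d+1}` -/

abbrev MIdx (d : ℕ) := Fin (d+1) → ℕ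

/-- `k! = ∏ᵢ k[i]!`. -/
def mfact {d : ℕ} (k : MIdx d) : ℕ := ∏ i, Nat.factorial (k i)

/-- `C(k,ℓ) = ∏ᵢ binom(k[i], ℓ[i])`. -/
def mchoose {d : ℕ} (k l : MIdx d) : ℕ := ∏ i, Nat.choose (k i) (l i)

/-- `|k| = Σᵢ k[i]`. -/
def msize {d : ℕ} (k : MIdx d) : ℕ := ∑ i, k i

/-- The unit multi-index `e_i`. -/
def munit {d : ℕ} (i : Fin (d+1)) : MIdx d := Pi.single i 1

/-- Sum of `f ℓ` over all multi-indices `ℓ ≤ m` (componentwise). -/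
noncomputable def msum {d : ℕ} {A : Type*} [AddCommMonoid A] (m : MIdx d) (f : MIdx d → A) : A :=
  ∑ e : (∀ i : Fin (d+1), Fin (m i + 1)), f fun i => (e i : ℕ)

/-- The scaled size `|k|_𝔰 = Σᵢ k[i]·𝔰ᵢ`. -/
noncomputable def wdeg {d : ℕ} (s : Fin (d+1) → ℝ) (k : MIdx d) : ℝ := ∑ i, (k i : ℝ) * s i

/-- The index set `𝒪 = 𝔏₊ × ℕ^{d+1}`. -/
abbrev Odx (Lp : Type) (d : ℕ) := Lp × MIdx d

/-! ### Functions on `ℝ^𝒪` and differential operators -/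

/-- Real-valued functions on `ℝ^𝒪`. -/
abbrev FnO (Lp : Type) (d : ℕ) := (Odx Lp d → ℝ) → ℝ

/-- The coordinate function `𝒳_o`. -/
def Xc {Lp : Type} {d : ℕ} (o : Odx Lp d) : FnO Lp d := fun x => x o

/-- The partial derivative `D_o` in the `o`-th coordinate. -/
noncomputable def Dpart {Lp : Type} {d : ℕ} [DecidableEq Lp] (o : Odx Lp d) (F : FnO Lp d) :
    FnO Lp d :=
  fun x => deriv (fun t : ℝ => F (Function.update x o t)) (x o)

/-- Iterated partial derivatives `D_{o₁} ∘ ⋯ ∘ D_{oₙ}` over a list. -/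
noncomputable def Dlist {Lp : Type} {d : ℕ} [DecidableEq Lp] (L : List (Odx Lp d))
    (F : FnO Lp d) : FnO Lp d :=
  L.foldr Dpart F

/-- The derivation `∂_i F = Σ_{(𝔱,p)} 𝒳_{(𝔱,p+e_i)} · D_{(𝔱,p)} F`. -/
noncomputable def pderivO {Lp : Type} {d : ℕ} [DecidableEq Lp] (i : Fin (d+1)) (F : FnO Lp d) :
    FnO Lp d :=
  fun x => ∑ᶠ o : Odx Lp d, Xc (o.1, o.2 + munit i) x * Dpart o F x

/-- `∂^k = ∏ᵢ ∂ᵢ^{k[i]}`. -/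
noncomputable def mpderiv {Lp : Type} {d : ℕ} [DecidableEq Lp] (k : MIdx d) (F : FnO Lp d) :
    FnO Lp d :=
  (List.finRange (d+1)).foldr (fun i G => (pderivO i)^[k i] G) F

/-- `D^α` for a finitely supported `α ∈ ℕ^𝒪`. -/
noncomputable def Dexp {Lp : Type} {d : ℕ} [DecidableEq Lp] (α : Odx Lp d →₀ ℕ)
    (F : FnO Lp d) : FnO Lp d :=
  Dlist (Finsupp.toMultiset α).toList F

/-- `α! = ∏_o α[o]!`. -/
def afact {Lp : Type} {d : ℕ} (α : Odx Lp d →₀ ℕ) : ℕ := α.prod fun _ n => Nat.factorial n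

/-- The monomial `𝒳^α`. -/
noncomputable def Xpow {Lp : Type} {d : ℕ} (α : Odx Lp d →₀ ℕ) : FnO Lp d :=
  fun x => α.prod fun o n => x o ^ n

/-- `F` depends only on the coordinates in `s`. -/
def DependsOnlyOn {Lp : Type} {d : ℕ} (F : FnO Lp d) (s : Set (Odx Lp d)) : Prop :=
  ∀ x y, (∀ o ∈ s, x o = y o) → F x = F y

/-- Membership in `𝒞_𝒪`: smooth functions depending on finitely many coordinates. -/
def IsSmoothCO {Lp : Type} {d : ℕ} (F : FnO Lp d) : Prop :=
  ∃ (s : Finset (Odx Lp d)) (g : (↥s → ℝ) → ℝ),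
    ContDiff ℝ (⊤ : ℕ∞) g ∧ ∀ x, F x = g fun o => x o.1

/-- Membership in `𝒫 ⊆ 𝒞_𝒪` (relative to the partition `𝒪 = 𝒪₊ ⊔ 𝒪₋`). -/
def IsP {Lp : Type} {d : ℕ} (Om Op : Set (Odx Lp d)) (F : FnO Lp d) : Prop :=
  ∃ (m : ℕ) (α : Fin m → (Odx Lp d →₀ ℕ)) (G : Fin m → FnO Lp d),
    Function.Injective α ∧
    (∀ j, ∀ o ∈ (α j).support, o ∈ Om) ∧
    (∀ j, IsSmoothCO (G j)) ∧
    (∀ j, G j ≠ 0) ∧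
    (∀ j, DependsOnlyOn (G j) Op) ∧
    F = fun x => ∑ j, G j x * Xpow (α j) x

/-- `F` is a real polynomial in finitely many of the coordinate functions. -/
def IsPolyFn {Lp : Type} {d : ℕ} (F : FnO Lp d) : Prop :=
  ∃ (s : Finset (Odx Lp d)) (P : MvPolynomial (↥s) ℝ),
    ∀ x, F x = MvPolynomial.eval (fun o => x o.1) P

/-! ### The trees of `𝒱` -/

/-- The set `𝒱` of decorated rooted trees, presented abstractly: a tree is uniquely
built from a root decoration `(𝔩,k) ∈ 𝔇 × ℕ^{d+1}` and a multiset of decorated branches,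
and every tree arises this way (induction). -/
structure TreeV (Lp Dr : Type) (d : ℕ) where
  V : Type
  node : Dr → MIdx d → Multiset (Odx Lp d × V) → V
  node_bij : Function.Bijective
    (fun x : Dr × MIdx d × Multiset (Odx Lp d × V) => node x.1 x.2.1 x.2.2)
  ind : ∀ P : V → Prop,
    (∀ l k (M : Multiset (Odx Lp d × V)), (∀ x ∈ M, P x.2) → P (node l k M)) → ∀ τ, P τ

namespace TreeV

variable {Lp Dr : Type} {d : ℕ} (S : TreeV Lp Dr d)

/-- Rebuild a tree after replacing the `j`-th branch by a linear combination of trees. -/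
noncomputable def replace (l : Dr) (k : MIdx d) (L : List (Odx Lp d × S.V))
    (j : Fin L.length) (w : S.V →₀ ℝ) : S.V →₀ ℝ :=
  w.sum fun τ' c => Finsupp.single (S.node l k (↑(L.set j ((L.get j).1, τ')))) c

/-- Decomposition of a tree into its root decoration and branches. -/
noncomputable def dec : S.V ≃ Dr × MIdx d × Multiset (Odx Lp d × S.V) :=
  (Equiv.ofBijective _ S.node_bij).symm

/-- The polynomial decoration at the root. -/
noncomputable def polyOf (τ : S.V) : MIdx d := (S.dec τ).2.1

/-- The multiset of branches at the root. -/
noncomputable def branchesOf (τ : S.V) : Multiset (Odx Lp d × S.V) := (S.dec τ).2.2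

/-- The commutative tree product merging the roots of `g 0, …, g (n-1)`
(adding the polynomial decorations), the merged root receiving the driver label `l`. -/
noncomputable def merge (l : Dr) {n : ℕ} (g : Fin n → S.V) : S.V :=
  S.node l (∑ r, S.polyOf (g r)) (∑ r, S.branchesOf (g r))

/-- Defining recursion of the grafting operators `⋖̂_o : 𝕍 ⊗ 𝕍 → 𝕍`. -/
def GraftSpec [DecidableEq Lp] (graft : Odx Lp d → S.V → S.V → (S.V →₀ ℝ)) : Prop :=
  ∀ (t : Lp) (p : MIdx d) (τ : S.V) (l : Dr) (k : MIdx d) (L : List (Odx Lp d × S.V)),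
    graft (t, p) τ (S.node l k ↑L) =
      msum (k ⊓ p) (fun ℓ =>
        (mchoose k ℓ : ℝ) •
          Finsupp.single (S.node l (k - ℓ) (((t, p - ℓ), τ) ::ₘ (↑L : Multiset _))) 1)
      + ∑ j : Fin L.length, S.replace l k L j (graft (t, p) τ (L.get j).2)

/-- Defining recursion of the symmetry factor `S(τ)`. -/
def SymSpec [DecidableEq Lp] [DecidableEq S.V] (sym : S.V → ℕ) : Prop :=
  ∀ (l : Dr) (k : MIdx d) (M : Multiset (Odx Lp d × S.V)),
    sym (S.node l k M) =
      mfact k * ∏ x ∈ M.toFinset, Nat.factorial (M.count x) * sym x.2 ^ M.count x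

/-- Defining recursion of the inner product on `𝕍`. -/
def IPSpec (ip : S.V → S.V → ℝ) : Prop :=
  ∀ (l l' : Dr) (k k' : MIdx d) (L L' : List (Odx Lp d × S.V)),
    ip (S.node l k ↑L) (S.node l' k' ↑L') =
      (if l = l' ∧ k = k' then (mfact k : ℝ) else 0) *
        ∑ s : Fin L.length ≃ Fin L'.length,
          ∏ j : Fin L.length,
            (if (L.get j).1 = (L'.get (s j)).1 then ip (L.get j).2 (L'.get (s j)).2 else 0)

/-- Defining recursion of `Υ^F`. -/
def UpsSpec [DecidableEq Lp] (F : Lp → Dr → FnO Lp d) (Ups : Lp → S.V → FnO Lp d) : Prop :=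
  ∀ (t : Lp) (l : Dr) (k : MIdx d) (L : List (Odx Lp d × S.V)),
    Ups t (S.node l k ↑L) = fun x =>
      (∏ j : Fin L.length, Ups (L.get j).1.1 (L.get j).2 x) *
        mpderiv k (Dlist (L.map Prod.fst) (F t l)) x

/-- Defining recursion of the raising operator `↑̂_i` on `𝕍`. -/
def RaiseSpec (raise : Fin (d+1) → S.V → (S.V →₀ ℝ)) : Prop :=
  ∀ (i : Fin (d+1)) (l : Dr) (k : MIdx d) (L : List (Odx Lp d × S.V)),
    raise i (S.node l k ↑L) =
      Finsupp.single (S.node l (k + munit i) ↑L) 1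
      + ∑ j : Fin L.length, S.replace l k L j (raise i (L.get j).2)

/-- Defining recursion of the cutting operator `⋖̂*_o : 𝕍 → 𝕍 ⊗ 𝕍` (elements of
`𝕍 ⊗ 𝕍` represented as finitely supported functions on pairs of trees, a pair
`(branch, trunk)` recording a cut). -/
def CutSpec [DecidableEq Lp] (cut : Odx Lp d → S.V → (S.V × S.V →₀ ℝ)) : Prop :=
  ∀ (t : Lp) (p : MIdx d) (l : Dr) (k : MIdx d) (L : List (Odx Lp d × S.V)),
    cut (t, p) (S.node l k ↑L) =
      (∑ j : Fin L.length,
        if (L.get j).1.1 = t ∧ (L.get j).1.2 ≤ p then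
          ((mfact (p - (L.get j).1.2) : ℝ))⁻¹ •
            Finsupp.single ((L.get j).2,
              S.node l (k + (p - (L.get j).1.2)) ↑(L.eraseIdx j)) 1
        else 0)
      + ∑ j : Fin L.length,
          (cut (t, p) (L.get j).2).sum fun ab c =>
            Finsupp.single (ab.1, S.node l k ↑(L.set j ((L.get j).1, ab.2))) c

/-- Defining recursion of the lowering operator `↑̂*_i` on `𝕍`. -/
def LowSpec (low : Fin (d+1) → S.V → (S.V →₀ ℝ)) : Prop :=
  ∀ (i : Fin (d+1)) (l : Dr) (k : MIdx d) (L : List (Odx Lp d × S.V)),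
    low i (S.node l k ↑L) =
      (k i : ℝ) • Finsupp.single (S.node l (k - munit i) ↑L) 1
      + ∑ j : Fin L.length, S.replace l k L j (low i (L.get j).2)

/-- Defining recursion of the predicate "`τ` is `𝔱`-non-vanishing for `F`". -/
def NVSpec [DecidableEq Lp] (F : Lp → Dr → FnO Lp d) (NV : Lp → S.V → Prop) : Prop :=
  ∀ (t : Lp) (l : Dr) (k : MIdx d) (L : List (Odx Lp d × S.V)),
    NV t (S.node l k ↑L) ↔
      (mpderiv k (Dlist (L.map Prod.fst) (F t l)) ≠ 0 ∧
        ∀ j : Fin L.length, NV (L.get j).1.1 (L.get j).2)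

/-- The coefficient series of `U_o − u_o·𝟏`, for the jet `U` with Taylor coefficients `u`
and planted-tree coefficients `c_𝔱(τ)/S(τ)`. -/
noncomputable def uSeries (z : Dr) (u : Odx Lp d → ℝ) (c : Lp → S.V → ℝ) (sym : S.V → ℕ)
    (o : Odx Lp d) (σ : S.V) : ℝ :=
  (∑ᶠ q : MIdx d, if q ≠ 0 ∧ σ = S.node z q 0 then u (o.1, o.2 + q) / (mfact q : ℝ) else 0) +
  ∑ᶠ τ : S.V, if σ = S.node z 0 {(o, τ)} then c o.1 τ / (sym τ : ℝ) else 0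

/-- The coefficient series of the product `(U − u·𝟏)^α · Ξ_l`, expanded by multilinearity
using the commutative tree product merging the roots. -/
noncomputable def powCoef (coef : Odx Lp d → S.V → ℝ) (l : Dr) (α : Odx Lp d →₀ ℕ)
    (σ : S.V) : ℝ :=
  ∑ᶠ g : Fin (Finsupp.toMultiset α).toList.length → S.V,
    (∏ r, coef ((Finsupp.toMultiset α).toList.get r) (g r)) *
      (if σ = S.merge l g then 1 else 0)

/-- The coefficient series of `Σ_{𝔩∈𝔇} F^𝔩_𝔱(U)·Ξ_𝔩`, where
`F^𝔩_𝔱(U)·Ξ_𝔩 = Σ_α (D^α F^𝔩_𝔱(u)/α!)·(U − u·𝟏)^α·Ξ_𝔩`. -/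
noncomputable def lhsCoef [DecidableEq Lp] (F : Lp → Dr → FnO Lp d) (u : Odx Lp d → ℝ)
    (coef : Odx Lp d → S.V → ℝ) (t : Lp) (σ : S.V) : ℝ :=
  ∑ᶠ l : Dr, ∑ᶠ α : Odx Lp d →₀ ℕ,
    Dexp α (F t l) u / (afact α : ℝ) * S.powCoef coef l α σ

/-- Defining recursion of the 𝔰-degree `|·|_𝔰` of decorated trees (with driver labels in
`𝔏₋ ⊔ {𝟎}`, encoded as `Option Lm` with `none = 𝟎`). -/
def DegSpec {Lm : Type} (S : TreeV Lp (Option Lm) d) (s : Fin (d+1) → ℝ)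
    (degL : Lp → ℝ) (degLm : Lm → ℝ) (deg : S.V → ℝ) : Prop :=
  ∀ (l : Option Lm) (k : MIdx d) (M : Multiset (Odx Lp d × S.V)),
    deg (S.node l k M) =
      l.elim 0 degLm + wdeg s k +
        ((M.map fun x => (degL x.1.1 - wdeg s x.1.2) + deg x.2).sum)

end TreeV

/-! ### The trees of `𝔅` -/

/-- Polynomial node-decoration factors `𝓘_{(𝔱,p)}[X^k]` with `p ≤ k` and `p ≠ k`;
an element is a pair `((𝔱,p), k)` subject to these constraints. -/
abbrev PolyDec (Lp : Type) (d : ℕ) :=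
  {x : Odx Lp d × MIdx d // x.1.2 ≤ x.2 ∧ x.1.2 ≠ x.2}

/-- Raise the polynomial exponent of a `PolyDec` by `e_i`. -/
def PolyDec.bump {Lp : Type} {d : ℕ} (pd : PolyDec Lp d) (i : Fin (d+1)) : PolyDec Lp d :=
  ⟨(pd.1.1, pd.1.2 + munit i), by
    constructor
    · exact fun j => le_trans (pd.2.1 j) (Nat.le_add_right _ _)
    · intro h
      have hi : pd.1.1.2 i ≤ pd.1.2 i := pd.2.1 i
      have h' : pd.1.1.2 i = pd.1.2 i + munit i i := congrFun h i
      simp only [munit, Pi.single_eq_same] at h'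
      omega⟩

/-- The fresh polynomial decoration `𝓘_{(𝔱,p)}[X^{p+e_i}]`. -/
def freshPD {Lp : Type} {d : ℕ} (o : Odx Lp d) (i : Fin (d+1)) : PolyDec Lp d :=
  ⟨(o, o.2 + munit i), by
    constructor
    · exact fun j => Nat.le_add_right _ _
    · intro h
      have h' : o.2 i = o.2 i + munit i i := congrFun h i
      simp only [munit, Pi.single_eq_same] at h'
      omega⟩

/-- Lower the polynomial exponent of a `PolyDec` by `e_i`. -/
def PolyDec.lower {Lp : Type} {d : ℕ} (pd : PolyDec Lp d) (i : Fin (d+1))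
    (h : pd.1.1.2 + munit i ≤ pd.1.2) (hne : ¬ pd.1.2 - munit i = pd.1.1.2) : PolyDec Lp d :=
  ⟨(pd.1.1, pd.1.2 - munit i), by
    constructor
    · intro j
      have hj := h j
      simp only [Pi.add_apply, Pi.sub_apply] at hj ⊢
      omega
    · exact fun hh => hne hh.symm⟩

/-- The set `𝔅` of decorated rooted trees with polynomial node decorations, presented
abstractly. -/
structure TreeB (Lp Dr : Type) (d : ℕ) where
  B : Type
  node : Dr → Multiset (PolyDec Lp d) → Multiset (Odx Lp d × B) → B
  node_bij : Function.Bijective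
    (fun x : Dr × Multiset (PolyDec Lp d) × Multiset (Odx Lp d × B) => node x.1 x.2.1 x.2.2)
  ind : ∀ P : B → Prop,
    (∀ l N (M : Multiset (Odx Lp d × B)), (∀ x ∈ M, P x.2) → P (node l N M)) → ∀ σ, P σ

namespace TreeB

variable {Lp Dr : Type} {d : ℕ} (S : TreeB Lp Dr d)

/-- Rebuild a tree after replacing the `j`-th branch by a linear combination of trees. -/
noncomputable def replace (l : Dr) (N : List (PolyDec Lp d)) (L : List (Odx Lp d × S.B))
    (j : Fin L.length) (w : S.B →₀ ℝ) : S.B →₀ ℝ :=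
  w.sum fun σ' c => Finsupp.single (S.node l ↑N (↑(L.set j ((L.get j).1, σ')))) c

/-- Defining recursion of `Υ̊^F`. -/
def UpsSpec [DecidableEq Lp] (F : Lp → Dr → FnO Lp d) (Ups : Lp → S.B → FnO Lp d) : Prop :=
  ∀ (t : Lp) (l : Dr) (N : List (PolyDec Lp d)) (L : List (Odx Lp d × S.B)),
    Ups t (S.node l ↑N ↑L) = fun x =>
      (∏ i : Fin N.length, x ((N.get i).1.1.1, (N.get i).1.2)) *
      (∏ j : Fin L.length, Ups (L.get j).1.1 (L.get j).2 x) *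
      Dlist (N.map (fun pd => pd.1.1) ++ L.map Prod.fst) (F t l) x

/-- Defining recursion of the grafting operators `⋖_o` on `𝔅`. -/
def GraftSpec (graft : Odx Lp d → S.B → S.B → (S.B →₀ ℝ)) : Prop :=
  ∀ (o : Odx Lp d) (σ' : S.B) (l : Dr) (N : List (PolyDec Lp d)) (L : List (Odx Lp d × S.B)),
    graft o σ' (S.node l ↑N ↑L) =
      Finsupp.single (S.node l ↑N ((o, σ') ::ₘ (↑L : Multiset _))) 1
      + (∑ j : Fin L.length, S.replace l N L j (graft o σ' (L.get j).2))
      + ∑ i : Fin N.length,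
          (if o = ((N.get i).1.1.1, (N.get i).1.2) then
            Finsupp.single
              (S.node l ↑(N.eraseIdx i) (((N.get i).1.1, σ') ::ₘ (↑L : Multiset _))) 1
          else 0)

/-- Defining recursion of the inner product on `𝔹`. -/
def IPSpec (ip : S.B → S.B → ℝ) : Prop :=
  ∀ (l l' : Dr) (N N' : List (PolyDec Lp d)) (L L' : List (Odx Lp d × S.B)),
    ip (S.node l ↑N ↑L) (S.node l' ↑N' ↑L') =
      (if l = l' then 1 else 0) *
      (∑ s : Fin N.length ≃ Fin N'.length,
        ∏ i : Fin N.length,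
          (if (N.get i).1 = (N'.get (s i)).1 then
            (mfact ((N.get i).1.2 - (N.get i).1.1.2) : ℝ)
          else 0)) *
      ∑ s : Fin L.length ≃ Fin L'.length,
        ∏ j : Fin L.length,
          (if (L.get j).1 = (L'.get (s j)).1 then ip (L.get j).2 (L'.get (s j)).2 else 0)

/-- Defining recursion of the raising operator `↑_i` on `𝔅`, producing a formal series
(represented by its coefficient function `𝔅 → ℝ`). -/
def RaiseSpec (raise : Fin (d+1) → S.B → (S.B → ℝ)) : Prop :=
  ∀ (i : Fin (d+1)) (l : Dr) (N : List (PolyDec Lp d)) (L : List (Odx Lp d × S.B)),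
    raise i (S.node l ↑N ↑L) = fun σ'' =>
      (∑ ib : Fin N.length,
        (if σ'' = S.node l ↑(N.set ib ((N.get ib).bump i)) ↑L then 1 else 0))
      + (if ∃ o : Odx Lp d, σ'' = S.node l (freshPD o i ::ₘ (↑N : Multiset _)) ↑L then 1 else 0)
      + ∑ j : Fin L.length,
          ∑ᶠ σ' : S.B,
            raise i (L.get j).2 σ' *
              (if σ'' = S.node l ↑N ↑(L.set j ((L.get j).1, σ')) then 1 else 0)

/-- Defining recursion of the lowering operator `↑*_i` on `𝔅`. -/
def LowSpec (low : Fin (d+1) → S.B → (S.B →₀ ℝ)) : Prop :=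
  ∀ (i : Fin (d+1)) (l : Dr) (N : List (PolyDec Lp d)) (L : List (Odx Lp d × S.B)),
    low i (S.node l ↑N ↑L) =
      (∑ ib : Fin N.length,
        (if h : (N.get ib).1.1.2 + munit i ≤ (N.get ib).1.2 then
          (((N.get ib).1.2 i - (N.get ib).1.1.2 i : ℕ) : ℝ) •
            (if he : (N.get ib).1.2 - munit i = (N.get ib).1.1.2 then
              Finsupp.single (S.node l ↑(N.eraseIdx ib) ↑L) 1
            else
              Finsupp.single (S.node l ↑(N.set ib ((N.get ib).lower i h he)) ↑L) 1)
        else 0))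
      + ∑ j : Fin L.length, S.replace l N L j (low i (L.get j).2)

/-- Defining recursion of the cutting operator `⋖*_o : 𝔹 → 𝔹 ⊗ 𝔹` (elements of
`𝔹 ⊗ 𝔹` represented as finitely supported functions on pairs of trees, a pair
`(branch, trunk)` recording a cut). -/
def CutSpec (cut : Odx Lp d → S.B → (S.B × S.B →₀ ℝ)) : Prop :=
  ∀ (t : Lp) (p : MIdx d) (l : Dr) (N : List (PolyDec Lp d)) (L : List (Odx Lp d × S.B)),
    cut (t, p) (S.node l ↑N ↑L) =
      (∑ j : Fin L.length,
        (if hc : (L.get j).1.1 = t ∧ (L.get j).1.2 ≤ p then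
          ((mfact (p - (L.get j).1.2) : ℝ))⁻¹ •
            Finsupp.single ((L.get j).2,
              S.node l
                (if he : (L.get j).1.2 = p then (↑N : Multiset (PolyDec Lp d))
                 else (⟨((L.get j).1, p), hc.2, he⟩ ::ₘ (↑N : Multiset (PolyDec Lp d))))
                ↑(L.eraseIdx j)) 1
        else 0))
      + ∑ j : Fin L.length,
          (cut (t, p) (L.get j).2).sum fun ab c =>
            Finsupp.single (ab.1, S.node l ↑N ↑(L.set j ((L.get j).1, ab.2))) c

end TreeB

/-- Defining recursion of the map `Q : 𝔹 → 𝕍` collapsing polynomial decorations. -/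
def QSpec {Lp Dr : Type} {d : ℕ} (SB : TreeB Lp Dr d) (SV : TreeV Lp Dr d)
    (Qf : SB.B → SV.V) : Prop :=
  ∀ (l : Dr) (N : Multiset (PolyDec Lp d)) (M : Multiset (Odx Lp d × SB.B)),
    Qf (SB.node l N M) =
      SV.node l ((N.map fun pd => pd.1.2 - pd.1.1.2).sum) (M.map fun x => (x.1, Qf x.2))

/-- The generic summand of the multivariate Faà di Bruno formula, indexed by `(r, q⃗, m⃗)`;
it vanishes unless `(q⃗, m⃗) ∈ I(r,k)`. -/
noncomputable def fdbSummand {Lp : Type} {d : ℕ} [DecidableEq Lp] (lo : LinearOrder (MIdx d))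
    (F : FnO Lp d) (k : MIdx d)
    (p : Σ r : ℕ, (Fin r → MIdx d) × (Fin r → (Odx Lp d →₀ ℕ))) : FnO Lp d :=
  if (∀ j, p.2.2 j ≠ 0) ∧ (∀ j j' : Fin p.1, j < j' → lo.lt (p.2.1 j) (p.2.1 j')) ∧
      (∀ j, lo.lt 0 (p.2.1 j)) ∧ (∑ j, ((p.2.2 j).sum fun _ n => n) • p.2.1 j) = k then
    fun x =>
      (∏ j, (p.2.2 j).prod fun o n =>
        (x (o.1, o.2 + p.2.1 j) / (mfact (p.2.1 j) : ℝ)) ^ n / (Nat.factorial n : ℝ)) *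
        Dexp (∑ j, p.2.2 j) F x
  else 0

/-! ### Generic decorated trees -/

/-- Decorated rooted trees over node species `N` and edge species `E`,
presented abstractly. -/
structure GTree (N E : Type) where
  T : Type
  node : N → Multiset (E × T) → T
  node_bij : Function.Bijective (fun x : N × Multiset (E × T) => node x.1 x.2)
  ind : ∀ P : T → Prop, (∀ Y M, (∀ x ∈ M, P x.2) → P (node Y M)) → ∀ τ, P τ

namespace GTree

/-- Multilinear expansion of a list of edge-decorated linear combinations of trees into a
linear combination of branch multisets. -/
noncomputable def expandAux {N E : Type} (S : GTree N E) :
    List (E × (S.T →₀ ℝ)) → (Multiset (E × S.T) →₀ ℝ)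
  | [] => Finsupp.single 0 1
  | (e, w) :: L =>
      w.sum fun τ' c => (S.expandAux L).sum fun M c' => Finsupp.single ((e, τ') ::ₘ M) (c * c')

/-- Defining recursion of the functorial extension `𝔗(A)` of a linear map `A` between
the free vector spaces on the node species. -/
def MapSpec {N N' E : Type} (S : GTree N E) (S' : GTree N' E)
    (A : N → (N' →₀ ℝ)) (TA : S.T → (S'.T →₀ ℝ)) : Prop :=
  ∀ (Y : N) (L : List (E × S.T)),
    TA (S.node Y ↑L) =
      (A Y).sum fun Y' c =>
        (S'.expandAux (L.map fun x => (x.1, TA x.2))).sum fun M c' =>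
          Finsupp.single (S'.node Y' M) (c * c')

/-- Defining recursion of the inner product on `𝔗(𝖭,𝖤)` induced by an inner product on
the node species. -/
def IPSpec {N E : Type} (S : GTree N E) (ipN : N → N → ℝ) (ip : S.T → S.T → ℝ) : Prop :=
  ∀ (Y Y' : N) (L L' : List (E × S.T)),
    ip (S.node Y ↑L) (S.node Y' ↑L') =
      ipN Y Y' * ∑ s : Fin L.length ≃ Fin L'.length,
        ∏ j : Fin L.length,
          (if (L.get j).1 = (L'.get (s j)).1 then ip (L.get j).2 (L'.get (s j)).2 else 0)

end GTree

/-!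
Suppose `F` depends only on the coordinates in a finite set `s` and `∂ᵢ F = 0`. For `o ∈ s`
with maximal `i`-th multi-index entry, the coordinate `o + eᵢ` lies outside `s`, so it enters
`∂ᵢ F` only as the coefficient of `D_o F`; hence `D_o F = 0`, `F` does not depend on `o`, and
induction on `s` shows that `F` is constant. Since `∂ᵢ G` vanishes at the origin, `∂ᵢ G` can only
be constant by being `0`, and as `𝒞_𝒪` is stable under every `∂ᵢ`, the factors of `∂^k` can be
peeled off one at a time. Conversely, `∂ᵢ` kills constants.
-/

end SPDERenorm

lemma Function.iterate_reflect {α : Type*} {f : α → α} {P Q : α → Prop}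
    (hP : ∀ a, P a → P (f a)) (hQ : ∀ a, P a → Q (f a) → Q a) (n : ℕ) {a : α} (ha : P a)
    (h : Q (f^[n] a)) : Q a := by
  induction n generalizing a with
  | zero => exact h
  | succ n ih => exact hQ a ha (ih (hP a ha) (by rwa [← Function.iterate_succ_apply]))

lemma List.foldr_reflect {α β : Type*} {f : α → β → β} {P Q : β → Prop}
    (hP : ∀ a b, P b → P (f a b)) (hQ : ∀ a b, P b → Q (f a b) → Q b) (L : List α) {b : β}
    (hb : P b) (h : Q (L.foldr f b)) : Q b := by
  induction L with
  | nil => exact h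
  | cons a L ih => exact ih (hQ a _ (L.foldrRecOn f hb fun b hb a _ => hP a b hb) h)

namespace SPDERenorm

section Coordinates

variable {Lp : Type} {d : ℕ}

def shiftO (i : Fin (d+1)) (o : Odx Lp d) : Odx Lp d := (o.1, o.2 + munit i)

lemma shiftO_injective (i : Fin (d+1)) : Function.Injective (shiftO (Lp := Lp) (d := d) i) :=
  fun _ _ h => Prod.ext (Prod.ext_iff.1 h).1 (add_right_cancel (Prod.ext_iff.1 h).2)

lemma dependsOnlyOn_of_eq_comp {s : Finset (Odx Lp d)} {g : (↥s → ℝ) → ℝ} {F : FnO Lp d}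
    (hrep : ∀ x, F x = g fun j => x j) : DependsOnlyOn F s := fun x y hxy => by
  rw [hrep, hrep]
  exact congrArg g (funext fun j => hxy j j.2)

lemma IsSmoothCO.exists_dependsOnlyOn {F : FnO Lp d} (hF : IsSmoothCO F) :
    ∃ s : Finset (Odx Lp d), DependsOnlyOn F s := by
  obtain ⟨s, g, -, hrep⟩ := hF
  exact ⟨s, dependsOnlyOn_of_eq_comp hrep⟩

variable [DecidableEq Lp]

namespace DependsOnlyOn

variable {F : FnO Lp d}

lemma dpart_eq_zero {s : Set (Odx Lp d)} (hF : DependsOnlyOn F s) {o : Odx Lp d} (ho : o ∉ s)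
    (x : Odx Lp d → ℝ) : Dpart o F x = 0 := by
  have hline : (fun t : ℝ => F (Function.update x o t)) = fun _ => F x :=
    funext fun t => hF _ _ fun j hj => Function.update_of_ne (ne_of_mem_of_not_mem hj ho) _ _
  rw [Dpart, hline, deriv_const]

lemma dpart {s : Set (Odx Lp d)} (hF : DependsOnlyOn F s) (o : Odx Lp d) :
    DependsOnlyOn (Dpart o F) s := by
  intro x y hxy
  by_cases ho : o ∈ s
  · have hline : (fun t : ℝ => F (Function.update x o t)) = fun t => F (Function.update y o t) :=
      funext fun t => hF _ _ fun j hj => by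
        by_cases hjo : j = o
        · simp [hjo]
        · simp [Function.update_of_ne hjo, hxy j hj]
    rw [Dpart, Dpart, hline, hxy o ho]
  · rw [hF.dpart_eq_zero ho, hF.dpart_eq_zero ho]

lemma pderivO_eq_sum {s : Finset (Odx Lp d)} (hF : DependsOnlyOn F s) (i : Fin (d+1))
    (x : Odx Lp d → ℝ) : pderivO i F x = ∑ o ∈ s, x (shiftO i o) * Dpart o F x :=
  finsum_eq_sum_of_support_subset _ fun o ho => by
    by_contra hos
    exact ho (by simp [hF.dpart_eq_zero hos x])

lemma dpart_eq_zero_of_pderivO_eq_zero {s : Finset (Odx Lp d)} (hF : DependsOnlyOn F s)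
    {i : Fin (d+1)} (hp : pderivO i F = 0) {o : Odx Lp d} (ho : o ∈ s)
    (hmax : ∀ o' ∈ s, o'.2 i ≤ o.2 i) (x : Odx Lp d → ℝ) : Dpart o F x = 0 := by
  have hso : shiftO i o ∉ s := fun h => by simpa [shiftO, munit] using hmax _ h
  set y := Function.update x (shiftO i o) (x (shiftO i o) + 1)
  have hys : ∀ j ∈ (s : Set (Odx Lp d)), y j = x j := fun j hj =>
    Function.update_of_ne (ne_of_mem_of_not_mem hj hso) _ _
  have hy : ∀ o', y (shiftO i o') - x (shiftO i o') = if o' = o then 1 else 0 := by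
    intro o'
    by_cases h : o' = o
    · simp [y, h]
    · simp [y, h, (shiftO_injective i).ne h]
  calc Dpart o F x = ∑ o' ∈ s, (y (shiftO i o') - x (shiftO i o')) * Dpart o' F x := by
        simp [hy, ho]
    _ = pderivO i F y - pderivO i F x := by
        rw [hF.pderivO_eq_sum, hF.pderivO_eq_sum, ← Finset.sum_sub_distrib]
        refine Finset.sum_congr rfl fun o' _ => ?_
        rw [hF.dpart o' y x hys]
        ring
    _ = 0 := by simp [hp]

lemma erase {s : Finset (Odx Lp d)} (hF : DependsOnlyOn F s) {o : Odx Lp d}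
    (hline : ∀ x, Differentiable ℝ fun t => F (Function.update x o t))
    (hD : ∀ x, Dpart o F x = 0) : DependsOnlyOn F (s.erase o) := by
  intro x y hxy
  have hconst : ∀ t, F (Function.update x o t) = F x := fun t => by
    simpa using is_const_of_deriv_eq_zero (hline x)
      (fun t => by simpa [Dpart] using hD (Function.update x o t)) t (x o)
  rw [← hconst (y o)]
  refine hF _ _ fun j hj => ?_
  by_cases hjo : j = o
  · simp [hjo]
  · rw [Function.update_of_ne hjo]
    exact hxy j (by simpa [hjo] using hj)

theorem exists_eq_const_of_pderivO_eq_zero {s : Finset (Odx Lp d)} (hF : DependsOnlyOn F s)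
    (hline : ∀ x o, Differentiable ℝ fun t => F (Function.update x o t))
    {i : Fin (d+1)} (hp : pderivO i F = 0) : ∃ r : ℝ, F = fun _ => r := by
  induction s using Finset.strongInduction with
  | H s ih =>
    rcases s.eq_empty_or_nonempty with rfl | hs
    · exact ⟨F 0, funext fun x => hF _ _ (by simp)⟩
    · obtain ⟨o, ho, hmax⟩ := s.exists_max_image (fun o => o.2 i) hs
      exact ih _ (Finset.erase_ssubset ho)
        (hF.erase (hline · o) (hF.dpart_eq_zero_of_pderivO_eq_zero hp ho hmax))

end DependsOnlyOn

end Coordinates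

section Constants

variable {Lp : Type} {d : ℕ} [DecidableEq Lp]

lemma pderivO_apply_zero (i : Fin (d+1)) (F : FnO Lp d) : pderivO i F 0 = 0 := by
  simp [pderivO, Xc]

lemma pderivO_const (i : Fin (d+1)) (r : ℝ) : pderivO i (fun _ => r : FnO Lp d) = 0 := by
  funext x
  simp [pderivO, Dpart]

lemma iterate_pderivO_const (i : Fin (d+1)) (m : ℕ) (r : ℝ) :
    (pderivO i)^[m] (fun _ => r : FnO Lp d) = fun _ => if m = 0 then r else 0 := by
  cases m with
  | zero => rfl
  | succ m =>
    rw [Function.iterate_succ_apply, pderivO_const]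
    exact Function.iterate_fixed (pderivO_const i 0) m

lemma mpderiv_const {k : MIdx d} (hk : k ≠ 0) (r : ℝ) :
    mpderiv k (fun _ => r : FnO Lp d) = 0 := by
  obtain ⟨i, hi⟩ : ∃ i, k i ≠ 0 := Function.ne_iff.1 hk
  obtain ⟨L₁, L₂, hL⟩ := List.append_of_mem (List.mem_finRange i)
  obtain ⟨r', hr'⟩ : ∃ r', L₂.foldr (fun i G => (pderivO i)^[k i] G) (fun _ => r) = fun _ => r' :=
    L₂.foldrRecOn (motive := fun G : FnO Lp d => ∃ r' : ℝ, G = fun _ => r') _ ⟨r, rfl⟩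
      fun _ ⟨_, hG⟩ j _ => ⟨_, hG ▸ iterate_pderivO_const j (k j) _⟩
  rw [mpderiv, hL, List.foldr_append, List.foldr_cons, hr', iterate_pderivO_const, if_neg hi]
  exact L₁.foldrRecOn (motive := (· = 0)) _ rfl fun _ hG j _ => by
    rw [hG]
    exact Function.iterate_fixed (pderivO_const j 0) (k j)

end Constants

section Smooth

variable {Lp : Type} {d : ℕ} [DecidableEq Lp]

lemma hasDerivAt_update_of_eq_comp {s : Finset (Odx Lp d)} {g : (↥s → ℝ) → ℝ} {F : FnO Lp d}
    (hg : Differentiable ℝ g) (hrep : ∀ x, F x = g fun j => x j) (x : Odx Lp d → ℝ)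
    (o : Odx Lp d) (t : ℝ) :
    HasDerivAt (fun u => F (Function.update x o u))
      (fderiv ℝ g (fun j => Function.update x o t j) fun j => if (j : Odx Lp d) = o then 1 else 0)
      t := by
  have hline : HasDerivAt (fun u => fun j : ↥s => Function.update x o u j)
      (fun j => if (j : Odx Lp d) = o then 1 else 0) t :=
    hasDerivAt_pi.2 fun j => by
      by_cases h : (j : Odx Lp d) = o
      · simpa [h] using hasDerivAt_id' t
      · simpa [h] using hasDerivAt_const t (x j)
  simp only [hrep]
  exact (hg _).hasFDerivAt.comp_hasDerivAt t hline

lemma dpart_eq_fderiv_of_eq_comp {s : Finset (Odx Lp d)} {g : (↥s → ℝ) → ℝ} {F : FnO Lp d}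
    (hg : Differentiable ℝ g) (hrep : ∀ x, F x = g fun j => x j) (x : Odx Lp d → ℝ)
    (o : Odx Lp d) :
    Dpart o F x = fderiv ℝ g (fun j => x j) fun j => if (j : Odx Lp d) = o then 1 else 0 := by
  rw [Dpart]
  simpa using (hasDerivAt_update_of_eq_comp hg hrep x o (x o)).deriv

namespace IsSmoothCO

variable {F : FnO Lp d}

lemma differentiable_update (hF : IsSmoothCO F) (x : Odx Lp d → ℝ) (o : Odx Lp d) :
    Differentiable ℝ fun t => F (Function.update x o t) := by
  obtain ⟨s, g, hg, hrep⟩ := hF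
  exact fun t =>
    (hasDerivAt_update_of_eq_comp (hg.differentiable (by simp)) hrep x o t).differentiableAt

lemma exists_eq_const_of_pderivO_eq_const (hF : IsSmoothCO F) {i : Fin (d+1)}
    (h : ∃ r : ℝ, pderivO i F = fun _ => r) : ∃ r : ℝ, F = fun _ => r := by
  obtain ⟨r, hr⟩ := h
  have hr0 : r = 0 := by simpa [hr] using pderivO_apply_zero i F
  obtain ⟨s, hs⟩ := hF.exists_dependsOnlyOn
  exact hs.exists_eq_const_of_pderivO_eq_zero hF.differentiable_update (by rw [hr, hr0]; rfl)

end IsSmoothCO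

lemma isSmoothCO_pderivO {F : FnO Lp d} (hF : IsSmoothCO F) (i : Fin (d+1)) :
    IsSmoothCO (pderivO i F) := by
  obtain ⟨s, g, hg, hrep⟩ := hF
  set s' : Finset (Odx Lp d) := s ∪ s.image (shiftO i)
  have hmem : ∀ j : ↥s, j.1 ∈ s' := fun j => Finset.mem_union_left _ j.2
  have hmem_shift : ∀ j : ↥s, shiftO i j.1 ∈ s' := fun j =>
    Finset.mem_union_right _ (Finset.mem_image_of_mem _ j.2)
  let e : Odx Lp d → ↥s → ℝ := fun o j => if (j : Odx Lp d) = o then 1 else 0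
  refine ⟨s', fun y => ∑ o ∈ s.attach,
    y ⟨shiftO i o, hmem_shift o⟩ * fderiv ℝ g (fun j => y ⟨j, hmem j⟩) (e o), ?_, fun x => ?_⟩
  · refine ContDiff.sum fun o _ => (contDiff_apply _ _ _).mul ?_
    exact ((hg.fderiv_right le_rfl).comp (contDiff_pi.2 fun j => contDiff_apply _ _ _)).clm_apply
      contDiff_const
  · rw [(dependsOnlyOn_of_eq_comp hrep).pderivO_eq_sum, ← Finset.sum_attach]
    refine Finset.sum_congr rfl fun o _ => ?_
    rw [dpart_eq_fderiv_of_eq_comp (hg.differentiable (by simp)) hrep]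

lemma IsSmoothCO.exists_eq_const_of_mpderiv_eq_const {F : FnO Lp d} (hF : IsSmoothCO F)
    {k : MIdx d} (h : ∃ r : ℝ, mpderiv k F = fun _ => r) : ∃ r : ℝ, F = fun _ => r := by
  have hstable : ∀ i (G : FnO Lp d), IsSmoothCO G → IsSmoothCO ((pderivO i)^[k i] G) :=
    fun i _ hG => Function.Iterate.rec _ hG (fun _ hH => isSmoothCO_pderivO hH i) (k i)
  have hreflect : ∀ i (G : FnO Lp d), IsSmoothCO G →
      (∃ r : ℝ, (pderivO i)^[k i] G = fun _ => r) → ∃ r : ℝ, G = fun _ => r :=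
    fun i _ hG => Function.iterate_reflect (Q := fun G : FnO Lp d => ∃ r : ℝ, G = fun _ => r)
      (fun _ hH => isSmoothCO_pderivO hH i)
      (fun _ hH => hH.exists_eq_const_of_pderivO_eq_const) (k i) hG
  exact List.foldr_reflect (Q := fun G : FnO Lp d => ∃ r : ℝ, G = fun _ => r)
    hstable hreflect _ hF h

end Smooth

theorem statement11_general
    {d : ℕ} {Lp : Type} [DecidableEq Lp]
    (F : FnO Lp d) (hF : IsSmoothCO F) (k : MIdx d) (hk : k ≠ 0) :
    mpderiv k F = 0 ↔ ∃ r : ℝ, F = fun _ => r := by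
  constructor
  · exact fun h => hF.exists_eq_const_of_mpderiv_eq_const ⟨0, h⟩
  · rintro ⟨r, rfl⟩
    exact mpderiv_const hk r

/-- Lemma `lem:partialK F vanishes`: for `F ∈ 𝒞_𝒪` and `k ≠ 0`,
`∂^k F = 0` if and only if `F` is constant. -/
theorem statement11
    {d : ℕ} {Lp : Type} [Fintype Lp] [DecidableEq Lp]
    (F : FnO Lp d) (hF : IsSmoothCO F) (k : MIdx d) (hk : k ≠ 0) :
    mpderiv k F = 0 ↔ ∃ r : ℝ, F = fun _ => r :=
  statement11_general F hF k hk

end SPDERenorm
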